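/- Let a₁, a₂, a₃ be real numbers with a₁² + a₂² + a₃² < 1, and let A = I₄ - Σⱼ aⱼ αʲ where αʲ = γ⁰γʲ. Then A is Hermitian and positive definite; more precisely, for every ψ ∈ ℂ⁴, ψ* A ψ ≥ (1 - √(a₁²+a₂²+a₃²)) |ψ|². -/
import Mathlib


open Matrix Complex

noncomputable def g0 : Matrix (Fin 4) (Fin 4) ℂ :=
  !![1,0,0,0; 0,1,0,0; 0,0,-1,0; 0,0,0,-1]

noncomputable def g1 : Matrix (Fin 4) (Fin 4) ℂ :=
  !![0,0,0,1; 0,0,1,0; 0,-1,0,0; -1,0,0,0]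

noncomputable def g2 : Matrix (Fin 4) (Fin 4) ℂ :=
  !![0,0,0,-I; 0,0,I,0; 0,I,0,0; -I,0,0,0]

noncomputable def g3 : Matrix (Fin 4) (Fin 4) ℂ :=
  !![0,0,1,0; 0,0,0,-1; -1,0,0,0; 0,1,0,0]

noncomputable def g5 : Matrix (Fin 4) (Fin 4) ℂ :=
  !![0,0,-1,0; 0,0,0,-1; -1,0,0,0; 0,-1,0,0]
lemma youngC (u z : ℂ) (t : ℝ) :
    2 * t * ((starRingEnd ℂ u) * z).re ≤ t^2 * Complex.normSq u + Complex.normSq z := by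
  have h0 : (0:ℝ) ≤ Complex.normSq ((t:ℂ) * u - z) := Complex.normSq_nonneg _
  have h : Complex.normSq ((t:ℂ) * u - z)
      = t^2 * Complex.normSq u - 2 * t * ((starRingEnd ℂ u) * z).re + Complex.normSq z := by
    simp [Complex.normSq_apply, Complex.sub_re, Complex.sub_im, Complex.mul_re, Complex.mul_im,
      Complex.conj_re, Complex.conj_im, Complex.ofReal_re, Complex.ofReal_im]
    ring
  linarith [h0, h.le, h.ge]


set_option maxHeartbeats 1000000

/-- A = I₄ - Σⱼ aⱼ αʲ with a₁²+a₂²+a₃² < 1 is Hermitian and positive definite: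
ψ* A ψ ≥ (1 - √(a₁²+a₂²+a₃²)) |ψ|². -/
theorem matrix_A_pos_def (a₁ a₂ a₃ : ℝ) (ha : a₁^2 + a₂^2 + a₃^2 < 1)
    (A : Matrix (Fin 4) (Fin 4) ℂ)
    (hA : A = 1 - ((a₁:ℂ) • (g0 * g1) + (a₂:ℂ) • (g0 * g2) + (a₃:ℂ) • (g0 * g3))) :
    A.IsHermitian ∧
    ∀ ψ : Fin 4 → ℂ,
      (∑ j, starRingEnd ℂ (ψ j) * (A.mulVec ψ j)).re ≥
        (1 - Real.sqrt (a₁^2 + a₂^2 + a₃^2)) * ∑ j, Complex.normSq (ψ j) := by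
  have hAe : A = !![1,0,-(a₃:ℂ),-((a₁:ℂ) - I*a₂);
         0,1,-((a₁:ℂ) + I*a₂),(a₃:ℂ);
         -(a₃:ℂ),-((a₁:ℂ) - I*a₂),1,0;
         -((a₁:ℂ) + I*a₂),(a₃:ℂ),0,1] := by
    rw [hA]
    ext i j
    fin_cases i <;> fin_cases j <;>
      simp [g0, g1, g2, g3, Matrix.mul_apply, Fin.sum_univ_four, Matrix.one_apply,
        Matrix.vecHead, Matrix.vecTail] <;> ring
  subst hAe
  constructor
  · ext i j
    fin_cases i <;> fin_cases j <;>
      simp [Matrix.conjTranspose_apply, Complex.ext_iff, Complex.conj_re, Complex.conj_im]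
  · intro ψ
    set s : ℝ := a₁^2 + a₂^2 + a₃^2 with hs
    set r : ℝ := Real.sqrt s with hr
    have hs0 : 0 ≤ s := by positivity
    have hr2 : r^2 = s := Real.sq_sqrt hs0
    have hr0 : 0 ≤ r := Real.sqrt_nonneg _
    set z0 : ℂ := (a₃:ℂ) * ψ 2 + ((a₁:ℂ) - I*a₂) * ψ 3 with hz0
    set z1 : ℂ := ((a₁:ℂ) + I*a₂) * ψ 2 - (a₃:ℂ) * ψ 3 with hz1
    set N : ℝ := Complex.normSq (ψ 0) + Complex.normSq (ψ 1)
        + Complex.normSq (ψ 2) + Complex.normSq (ψ 3) with hN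
    have hsum : (∑ j, starRingEnd ℂ (ψ j) * (Matrix.mulVec (!![1,0,-(a₃:ℂ),-((a₁:ℂ) - I*a₂);
         0,1,-((a₁:ℂ) + I*a₂),(a₃:ℂ);
         -(a₃:ℂ),-((a₁:ℂ) - I*a₂),1,0;
         -((a₁:ℂ) + I*a₂),(a₃:ℂ),0,1]) ψ j)).re
        = N - (2 * ((starRingEnd ℂ (ψ 0)) * z0).re + 2 * ((starRingEnd ℂ (ψ 1)) * z1).re) := by
      simp only [Fin.sum_univ_four, Matrix.mulVec, dotProduct]
      simp [hz0, hz1, hN, Complex.normSq_apply, Complex.add_re, Complex.add_im,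
        Complex.sub_re, Complex.sub_im, Complex.mul_re, Complex.mul_im, Complex.neg_re,
        Complex.neg_im, Complex.conj_re, Complex.conj_im, Complex.I_re, Complex.I_im,
        Complex.ofReal_re, Complex.ofReal_im, Complex.one_re, Complex.one_im,
        Matrix.cons_val_zero, Matrix.cons_val_one, Matrix.head_cons]
      ring
    have hzz : Complex.normSq z0 + Complex.normSq z1
        = s * (Complex.normSq (ψ 2) + Complex.normSq (ψ 3)) := by
      simp [hz0, hz1, hs, Complex.normSq_apply, Complex.add_re, Complex.add_im,
        Complex.sub_re, Complex.sub_im, Complex.mul_re, Complex.mul_im,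
        Complex.I_re, Complex.I_im, Complex.ofReal_re, Complex.ofReal_im]
      ring
    have hNsum : (∑ j, Complex.normSq (ψ j)) = N := by
      simp [Fin.sum_univ_four, hN]
    rw [hsum, hNsum, ge_iff_le]
    have hT : 2 * ((starRingEnd ℂ (ψ 0)) * z0).re + 2 * ((starRingEnd ℂ (ψ 1)) * z1).re
        ≤ r * N := by
      rcases eq_or_lt_of_le hr0 with h0 | hpos
      · -- r = 0, hence s = 0, hence a₁ = a₂ = a₃ = 0
        have hs' : s = 0 := by rw [← hr2, ← h0]; ring
        have ha1 : a₁ = 0 := by nlinarith [sq_nonneg a₁, sq_nonneg a₂, sq_nonneg a₃]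
        have ha2 : a₂ = 0 := by nlinarith [sq_nonneg a₁, sq_nonneg a₂, sq_nonneg a₃]
        have ha3 : a₃ = 0 := by nlinarith [sq_nonneg a₁, sq_nonneg a₂, sq_nonneg a₃]
        have : z0 = 0 := by simp [hz0, ha1, ha2, ha3]
        have h1 : z1 = 0 := by simp [hz1, ha1, ha2, ha3]
        rw [this, h1, ← h0]
        simp
      · have hy0 := youngC (ψ 0) z0 r
        have hy1 := youngC (ψ 1) z1 r
        have : r * (2 * ((starRingEnd ℂ (ψ 0)) * z0).re + 2 * ((starRingEnd ℂ (ψ 1)) * z1).re)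
            ≤ r * (r * N) := by
          have : r * (r * N) = r^2 * (Complex.normSq (ψ 0) + Complex.normSq (ψ 1))
              + (Complex.normSq z0 + Complex.normSq z1) := by
            rw [hzz, hN, ← hr2]; ring
          rw [this]
          nlinarith [hy0, hy1]
        exact le_of_mul_le_mul_left this hpos
    nlinarith [Complex.normSq_nonneg (ψ 0), Complex.normSq_nonneg (ψ 1),
      Complex.normSq_nonneg (ψ 2), Complex.normSq_nonneg (ψ 3), hT]
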